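/- (Rademacher weights.) Let W_1,…,W_n be i.i.d. random variables with P(W_i = 0) = P(W_i = 2) = 1/2. For a subset Λ ⊆ {1,…,n} with card(Λ) = m ≥ 1, any i ∈ Λ, and W̄ := m^{−1} Σ_{j∈Λ} W_j, the quantity R₂(m) := E[(W_i − W̄)²/W̄ | W̄ > 0] converges to 1 as m → ∞; more precisely R₂(m) = 2 − 1/(1 − 2^{−m}). -/

import Mathlib

/-! Since `W_j ^ 2 = 2 W_j`, expanding the square gives, whenever `W̄ > 0`,
`∑_{j ∈ Λ} (W_j - W̄) ^ 2 / W̄ = m (2 - W̄)`. Swapping the coordinates `i` and `j` preserves the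
uniform measure and `W̄`, so every `i ∈ Λ` contributes the same conditional expectation, whence
`R₂(m) = E[2 - W̄ | W̄ > 0] = 2 - E[W̄] / P(W̄ > 0)`. Flipping all coins maps `W̄` to `2 - W̄`, so
`E[W̄] = 1`, and `W̄ = 0` exactly when all `m` coins of `Λ` land on `0`, so
`P(W̄ > 0) = 1 - 2⁻ᵐ`. -/

open MeasureTheory ProbabilityTheory Finset Filter

/-- uniform probability measure on a finite type. -/
noncomputable def unifM (α : Type*) [Fintype α] [MeasurableSpace α] : Measure α :=
  (Fintype.card α : ENNReal)⁻¹ • Measure.count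

/-- Rademacher resampling weights as a function of `u : Fin n → Bool` (uniform, i.e. the
`W_i` are i.i.d. with `P(W_i = 0) = P(W_i = 2) = 1/2`). -/
noncomputable def radW (n : ℕ) (i : Fin n) (u : Fin n → Bool) : ℝ :=
  if u i then 2 else 0

open scoped ENNReal

lemma ProbabilityTheory.cond_smul_measure {Ω : Type*} [MeasurableSpace Ω] (μ : Measure Ω)
    (s : Set Ω) {c : ℝ≥0∞} (hc₀ : c ≠ 0) (hc : c ≠ ∞) : (c • μ)[|s] = μ[|s] := by
  rw [cond, cond, Measure.restrict_smul, Measure.smul_apply, smul_eq_mul, smul_smul,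
    ENNReal.mul_inv (.inl hc₀) (.inl hc), mul_comm c⁻¹, mul_assoc, ENNReal.inv_mul_cancel hc₀ hc,
    mul_one]

lemma unifM_cond (α : Type*) [Fintype α] [Nonempty α] [MeasurableSpace α] (s : Set α) :
    (unifM α)[|s] = uniformOn s :=
  cond_smul_measure _ _ (ENNReal.inv_ne_zero.2 (ENNReal.natCast_ne_top _))
    (ENNReal.inv_ne_top.2 (Nat.cast_ne_zero.2 Fintype.card_ne_zero))

lemma integral_uniformOn_finset {α : Type*} [Fintype α] [MeasurableSpace α]
    [MeasurableSingletonClass α] (s : Finset α) (f : α → ℝ) :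
    ∫ x, f x ∂uniformOn (s : Set α) = (∑ x ∈ s, f x) / #s := by
  classical
  rw [integral_fintype .of_finite, sum_div, ← sum_subset (subset_univ s) fun x _ hx => ?_]
  · refine sum_congr rfl fun x hx => ?_
    rw [measureReal_def, ← coe_singleton, uniformOn_apply_finset, inter_singleton_of_mem hx]
    simp [div_eq_inv_mul]
  · rw [measureReal_def, ← coe_singleton, uniformOn_apply_finset, inter_singleton_of_notMem hx]
    simp

section Rademacher

variable {n : ℕ}

lemma radW_nonneg (j : Fin n) (u : Fin n → Bool) : 0 ≤ radW n j u := by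
  unfold radW; split_ifs <;> norm_num

lemma radW_sq (j : Fin n) (u : Fin n → Bool) : radW n j u ^ 2 = 2 * radW n j u := by
  unfold radW; split_ifs <;> norm_num

lemma radW_pos_iff {j : Fin n} {u : Fin n → Bool} : 0 < radW n j u ↔ u j = true := by
  unfold radW; split_ifs with h <;> simp [h]

lemma radW_not (j : Fin n) (u : Fin n → Bool) : radW n j (fun k => !u k) = 2 - radW n j u := by
  unfold radW; cases h : u j <;> simp [h]

noncomputable def radWbar (Λ : Finset (Fin n)) (u : Fin n → Bool) : ℝ :=
  (∑ j ∈ Λ, radW n j u) / #Λ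

variable {Λ : Finset (Fin n)}

lemma radWbar_nonneg (u : Fin n → Bool) : 0 ≤ radWbar Λ u :=
  div_nonneg (sum_nonneg fun j _ => radW_nonneg j u) (Nat.cast_nonneg _)

lemma card_mul_radWbar (hΛ : Λ.Nonempty) (u : Fin n → Bool) :
    #Λ * radWbar Λ u = ∑ j ∈ Λ, radW n j u :=
  mul_div_cancel₀ _ (Nat.cast_ne_zero.2 hΛ.card_ne_zero)

lemma radWbar_pos_iff (hΛ : Λ.Nonempty) {u : Fin n → Bool} :
    0 < radWbar Λ u ↔ ∃ j ∈ Λ, u j = true := by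
  rw [radWbar, div_pos_iff_of_pos_right (Nat.cast_pos.2 hΛ.card_pos),
    sum_pos_iff_of_nonneg fun j _ => radW_nonneg j u]
  simp only [radW_pos_iff]

lemma radWbar_not (hΛ : Λ.Nonempty) (u : Fin n → Bool) :
    radWbar Λ (fun k => !u k) = 2 - radWbar Λ u := by
  have := card_mul_radWbar hΛ u
  rw [radWbar, sum_congr rfl fun j _ => radW_not j u, sum_sub_distrib, sum_const, nsmul_eq_mul,
    ← this, ← mul_sub, mul_div_cancel_left₀ _ (Nat.cast_ne_zero.2 hΛ.card_ne_zero)]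

lemma radWbar_comp_perm {σ : Equiv.Perm (Fin n)} (hσ : {a | σ a ≠ a} ⊆ Λ)
    (u : Fin n → Bool) : radWbar Λ (u ∘ σ) = radWbar Λ u := by
  unfold radWbar
  congr 1
  exact σ.sum_comp Λ (fun j => radW n j u) hσ

lemma sum_sq_radW_sub_radWbar (hΛ : Λ.Nonempty) (u : Fin n → Bool) :
    ∑ j ∈ Λ, (radW n j u - radWbar Λ u) ^ 2 = #Λ * radWbar Λ u * (2 - radWbar Λ u) := by
  have hsum := card_mul_radWbar hΛ u
  simp only [sub_sq, radW_sq, sum_add_distrib, sum_sub_distrib, ← mul_sum, ← sum_mul, sum_const,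
    nsmul_eq_mul, ← hsum]
  ring

lemma sum_radWbar_eq (hΛ : Λ.Nonempty) : ∑ u : Fin n → Bool, radWbar Λ u = 2 ^ n := by
  have h : ∑ u, radWbar Λ u = ∑ u, (2 - radWbar Λ u) :=
    Fintype.sum_equiv (.piCongrRight fun _ => Equiv.boolNot) _ _ fun u => by
      change _ = 2 - radWbar Λ (fun k => !u k)
      rw [radWbar_not hΛ, sub_sub_cancel]
  rw [sum_sub_distrib, sum_const, card_univ, Fintype.card_fun, Fintype.card_bool,
    Fintype.card_fin, nsmul_eq_mul] at h
  push_cast at h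
  linarith

lemma card_filter_radWbar_pos (hΛ : Λ.Nonempty) :
    (#{u | 0 < radWbar Λ u} : ℝ) = 2 ^ n * (1 - (2 ^ #Λ)⁻¹) := by
  have hzero : ({u | ¬ 0 < radWbar Λ u} : Finset (Fin n → Bool)) =
      Fintype.piFinset fun j => if j ∈ Λ then {false} else univ := by
    ext u
    simp [radWbar_pos_iff hΛ, Fintype.mem_piFinset, mem_ite]
  have hcard_zero : #{u | ¬ 0 < radWbar Λ u} = 2 ^ (n - #Λ) := by
    rw [hzero, Fintype.card_piFinset]
    simp [apply_ite, prod_ite, filter_notMem_eq_sdiff, card_sdiff]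
  have hsplit :=
    card_filter_add_card_filter_not (s := univ) fun u : Fin n → Bool => 0 < radWbar Λ u
  rw [hcard_zero, card_univ, Fintype.card_fun, Fintype.card_bool, Fintype.card_fin] at hsplit
  rw [mul_one_sub, ← pow_sub₀ _ two_ne_zero (by simpa using card_le_univ Λ), eq_sub_iff_add_eq]
  exact_mod_cast hsplit

lemma sum_sq_radW_sub_radWbar_div (hΛ : Λ.Nonempty) {u : Fin n → Bool} (hu : 0 < radWbar Λ u) :
    ∑ j ∈ Λ, (radW n j u - radWbar Λ u) ^ 2 / radWbar Λ u = #Λ * (2 - radWbar Λ u) := by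
  rw [← sum_div, sum_sq_radW_sub_radWbar hΛ, mul_right_comm, mul_div_cancel_right₀ _ hu.ne']

lemma sum_sq_radW_sub_radWbar_div_swap {i j : Fin n} (hi : i ∈ Λ) (hj : j ∈ Λ) :
    ∑ u, (radW n i u - radWbar Λ u) ^ 2 / radWbar Λ u =
      ∑ u, (radW n j u - radWbar Λ u) ^ 2 / radWbar Λ u := by
  have hσ : {a | Equiv.swap i j a ≠ a} ⊆ Λ := fun a ha => by
    rcases (Equiv.swap_apply_ne_self_iff.1 ha).2 with rfl | rfl <;> assumption
  refine Fintype.sum_equiv ((Equiv.swap i j).arrowCongr (Equiv.refl Bool)) _ _ fun u => ?_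
  change _ = (radW n j (u ∘ Equiv.swap i j) - radWbar Λ (u ∘ Equiv.swap i j)) ^ 2 /
    radWbar Λ (u ∘ Equiv.swap i j)
  rw [radWbar_comp_perm hσ]
  simp [radW]

lemma sum_filter_radWbar_pos_sq_div (hΛ : Λ.Nonempty) {i : Fin n} (hi : i ∈ Λ) :
    ∑ u ∈ {u | 0 < radWbar Λ u}, (radW n i u - radWbar Λ u) ^ 2 / radWbar Λ u =
      2 * #{u | 0 < radWbar Λ u} - 2 ^ n := by
  set S : Finset (Fin n → Bool) := {u | 0 < radWbar Λ u}
  -- Off `S` we have `radWbar Λ u = 0`, so every summand vanishes there (`x / 0 = 0`).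
  have hS {f : (Fin n → Bool) → ℝ} (hf : ∀ u, radWbar Λ u = 0 → f u = 0) :
      ∑ u ∈ S, f u = ∑ u, f u :=
    sum_filter_of_ne fun u _ hu => (radWbar_nonneg u).lt_of_ne' fun h => hu (hf u h)
  have hF (j : Fin n) : ∑ u ∈ S, (radW n j u - radWbar Λ u) ^ 2 / radWbar Λ u =
      ∑ u, (radW n j u - radWbar Λ u) ^ 2 / radWbar Λ u :=
    hS fun u h => by rw [h, div_zero]
  have hsymm : ∀ j ∈ Λ, ∑ u ∈ S, (radW n j u - radWbar Λ u) ^ 2 / radWbar Λ u =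
      ∑ u ∈ S, (radW n i u - radWbar Λ u) ^ 2 / radWbar Λ u := fun j hj => by
    rw [hF, hF, sum_sq_radW_sub_radWbar_div_swap hj hi]
  have hcard : (#Λ : ℝ) ≠ 0 := Nat.cast_ne_zero.2 hΛ.card_ne_zero
  refine mul_left_cancel₀ hcard ?_
  calc (#Λ : ℝ) * ∑ u ∈ S, (radW n i u - radWbar Λ u) ^ 2 / radWbar Λ u
      = ∑ j ∈ Λ, ∑ u ∈ S, (radW n j u - radWbar Λ u) ^ 2 / radWbar Λ u := by
        rw [sum_congr rfl hsymm, sum_const, nsmul_eq_mul]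
    _ = ∑ u ∈ S, #Λ * (2 - radWbar Λ u) :=
        sum_comm.trans <| sum_congr rfl fun u hu =>
          sum_sq_radW_sub_radWbar_div hΛ (mem_filter.1 hu).2
    _ = #Λ * (2 * #S - 2 ^ n) := by
        rw [← mul_sum, sum_sub_distrib, sum_const, nsmul_eq_mul,
          hS (f := radWbar Λ) fun _ => id, sum_radWbar_eq hΛ, mul_comm (2 : ℝ)]

end Rademacher

lemma tendsto_two_sub_one_div_one_sub_inv_two_pow :
    Tendsto (fun m : ℕ => 2 - 1 / (1 - ((2 : ℝ) ^ m)⁻¹)) atTop (nhds 1) := by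
  have h : Tendsto (fun m : ℕ => ((2 : ℝ) ^ m)⁻¹) atTop (nhds 0) :=
    tendsto_inv_atTop_zero.comp (tendsto_pow_atTop_atTop_of_one_lt one_lt_two)
  have := (tendsto_const_nhds (x := (2 : ℝ))).sub
    ((tendsto_const_nhds (x := (1 : ℝ))).div ((tendsto_const_nhds (x := (1 : ℝ))).sub h)
      (by norm_num))
  norm_num at this ⊢
  exact this

theorem rademacher_R2_general (n : ℕ)
    (Λ : Finset (Fin n)) (m : ℕ) (hm : Λ.card = m) (hm1 : 1 ≤ m) (i : Fin n) (hi : i ∈ Λ) :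
    (∫ u, (radW n i u - (∑ j ∈ Λ, radW n j u) / m) ^ 2 /
          ((∑ j ∈ Λ, radW n j u) / m)
        ∂((unifM (Fin n → Bool))[|{u | 0 < (∑ j ∈ Λ, radW n j u) / m}]) =
        2 - 1 / (1 - ((2 : ℝ) ^ m)⁻¹)) ∧
      Tendsto (fun m : ℕ => 2 - 1 / (1 - ((2 : ℝ) ^ m)⁻¹)) atTop (nhds 1) := by
  subst hm
  refine ⟨?_, tendsto_two_sub_one_div_one_sub_inv_two_pow⟩
  have hΛ : Λ.Nonempty := card_pos.1 hm1
  change ∫ u, (radW n i u - radWbar Λ u) ^ 2 / radWbar Λ u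
    ∂(unifM _)[|{u | 0 < radWbar Λ u}] = _
  rw [← coe_filter_univ, unifM_cond, integral_uniformOn_finset,
    sum_filter_radWbar_pos_sq_div hΛ hi, card_filter_radWbar_pos hΛ]
  have h2m : ((2 : ℝ) ^ #Λ)⁻¹ < 1 := inv_lt_one_of_one_lt₀ (one_lt_pow₀ one_lt_two hΛ.card_ne_zero)
  generalize ((2 : ℝ) ^ #Λ)⁻¹ = x at h2m ⊢
  field_simp [(sub_pos.2 h2m).ne']

/-- **`R₂(m)` for Rademacher weights**: for any cell `Λ` of cardinality `m ≥ 1` and `i ∈ Λ`,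
with `W̄ = m⁻¹ Σ_{j∈Λ} W_j`, the quantity `R₂(m) = E[(W_i − W̄)²/W̄ | W̄ > 0]` equals
`2 − 1/(1 − 2⁻ᵐ)`, and it converges to `1` as `m → ∞`. -/
theorem rademacher_R2 (n : ℕ) (hn : 1 ≤ n)
    (Λ : Finset (Fin n)) (m : ℕ) (hm : Λ.card = m) (hm1 : 1 ≤ m) (i : Fin n) (hi : i ∈ Λ) :
    (∫ u, (radW n i u - (∑ j ∈ Λ, radW n j u) / m) ^ 2 /
          ((∑ j ∈ Λ, radW n j u) / m)
        ∂((unifM (Fin n → Bool))[|{u | 0 < (∑ j ∈ Λ, radW n j u) / m}]) =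
        2 - 1 / (1 - ((2 : ℝ) ^ m)⁻¹)) ∧
      Tendsto (fun m : ℕ => 2 - 1 / (1 - ((2 : ℝ) ^ m)⁻¹)) atTop (nhds 1) :=
  rademacher_R2_general n Λ m hm hm1 i hi
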